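/- arXiv:2211.03867 — 4 statements merged into one kernel-verified Lean document; each statement's English description precedes it below -/
import Mathlib

section
/- Every derivation of the Heisenberg Lie algebra 𝔥 has the form D(ζ,α) = (Aζ, ⟨η,ζ⟩ + (tr A)·α) for some A ∈ 𝔤𝔩(2) and η ∈ ℝ². -/
abbrev Hlie : Type := (ℝ × ℝ) × ℝ

noncomputable def theta (v : ℝ × ℝ) : ℝ × ℝ := (-v.2, v.1)

noncomputable def ip (v w : ℝ × ℝ) : ℝ := v.1 * w.1 + v.2 * w.2

noncomputable def br (X Y : Hlie) : Hlie := ((0, 0), ip X.1 (theta Y.1))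

/-!
A derivation maps the centre `ℝ z` of `𝔥` into itself, since `[X, D z] = D [X, z] - [D X, z] = 0`
for every `X`. Applying `D` to `z = [e₂, e₁]` then shows that `D z` is `(tr A) z`, where `A` is the
block of `D` on `ℝ² × 0` projected to `ℝ²`; linearity does the rest.
-/

namespace Heisenberg

def e₁ : Hlie := ((1, 0), 0)

def e₂ : Hlie := ((0, 1), 0)

def z : Hlie := ((0, 0), 1)

theorem br_eq (X Y : Hlie) : br X Y = ((0, 0), X.1.2 * Y.1.1 - X.1.1 * Y.1.2) := by
  simp only [br, ip, theta]
  congr 1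
  ring

theorem br_z_right (X : Hlie) : br X z = 0 := by
  simp [br_eq, z]

theorem br_e₂_e₁ : br e₂ e₁ = z := by
  simp [br_eq, e₁, e₂, z]

theorem fst_eq_zero_of_forall_br_eq_zero {Y : Hlie} (hY : ∀ X, br X Y = 0) : Y.1 = 0 := by
  have h₁ := congrArg Prod.snd (hY e₁)
  have h₂ := congrArg Prod.snd (hY e₂)
  simp only [br_eq, e₁, e₂, Prod.snd_zero] at h₁ h₂
  refine Prod.ext ?_ ?_ <;> simp only [Prod.fst_zero, Prod.snd_zero] <;> linarith

theorem mk_eq_smul_add (ζ : ℝ × ℝ) (α : ℝ) :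
    ((ζ, α) : Hlie) = ζ.1 • e₁ + ζ.2 • e₂ + α • z := by
  ext <;> simp [e₁, e₂, z]

section Derivation

variable {D : Hlie →ₗ[ℝ] Hlie} (hD : ∀ X Y : Hlie, D (br X Y) = br (D X) Y + br X (D Y))
include hD

theorem br_map_z_eq_zero (X : Hlie) : br X (D z) = 0 := by
  simpa [br_z_right] using (hD X z).symm

theorem map_z_eq : D z = ((0, 0), (D e₁).1.1 + (D e₂).1.2) := by
  refine Prod.ext (fst_eq_zero_of_forall_br_eq_zero (br_map_z_eq_zero hD)) ?_
  have h := congrArg Prod.snd (hD e₂ e₁)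
  rw [br_e₂_e₁, Prod.snd_add, br_eq, br_eq] at h
  rw [h]
  simp only [e₁, e₂]
  ring

end Derivation

end Heisenberg

/-- Every derivation of the Heisenberg Lie algebra has the block form
D(ζ,α) = (Aζ, ⟨η,ζ⟩ + (tr A)·α). -/
theorem heisenberg_derivation_form (D : Hlie →ₗ[ℝ] Hlie)
    (hD : ∀ X Y : Hlie, D (br X Y) = br (D X) Y + br X (D Y)) :
    ∃ a b c d η₁ η₂ : ℝ, ∀ (ζ : ℝ × ℝ) (α : ℝ),
      D (ζ, α) = ((a * ζ.1 + b * ζ.2, c * ζ.1 + d * ζ.2),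
        η₁ * ζ.1 + η₂ * ζ.2 + (a + d) * α) := by
  open Heisenberg in
  refine ⟨(D e₁).1.1, (D e₂).1.1, (D e₁).1.2, (D e₂).1.2, (D e₁).2, (D e₂).2, fun ζ α => ?_⟩
  rw [Heisenberg.mk_eq_smul_add, map_add, map_add, map_smul, map_smul, map_smul,
    Heisenberg.map_z_eq hD]
  ext <;> simp <;> ring
end

section
/- If L is a 2-dimensional closed subgroup of the Heisenberg group H whose identity component is ℝe₁ × {0} × ℝ, then L = (ℝ × aℤ) × ℝ for some a ≥ 0. -/
/-!
The identity component `K = {g | g.1.2 = 0}` is the kernel of `π g = g.1.2` and lies in `L`;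
since `L` is closed under multiplication it is a union of cosets of `K`, i.e. `L = π⁻¹ S` for the
closed subgroup `S = π L` of `ℝ`. A closed subgroup of `ℝ` is `ℝ` or `aℤ`, and `S = ℝ` would make
`L = H` connected, contradicting that its identity component is `K`.
-/

abbrev H : Type := (ℝ × ℝ) × ℝ

noncomputable def hmul (g h : H) : H :=
  (g.1 + h.1, g.2 + h.2 + (1 / 2) * ip g.1 (theta h.1))

namespace AddSubgroup

variable {G : Type*} [AddCommGroup G] [LinearOrder G] [IsOrderedAddMonoid G] [Archimedean G]
  [TopologicalSpace G] [OrderTopology G]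

theorem eq_top_or_exists_eq_zmultiples_of_isClosed (S : AddSubgroup G)
    (hS : IsClosed (S : Set G)) : S = ⊤ ∨ ∃ a, 0 ≤ a ∧ S = zmultiples a := by
  rcases S.dense_or_cyclic with hd | ⟨a, rfl⟩
  · left
    rw [← coe_eq_univ, ← hS.closure_eq, hd.closure_eq]
  · right
    refine ⟨|a|, abs_nonneg a, ?_⟩
    rcases abs_choice a with ha | ha <;> rw [ha, ← zmultiples_eq_closure]
    rw [zmultiples_neg]

end AddSubgroup

def vert (t : ℝ) : H := ((0, t), 0)

theorem mem_iff_vert_mem {L : Set H} (h_mul : ∀ g ∈ L, ∀ h ∈ L, hmul g h ∈ L)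
    (hker : ∀ g : H, g.1.2 = 0 → g ∈ L) (g : H) : g ∈ L ↔ vert g.1.2 ∈ L := by
  constructor
  · intro hg
    convert h_mul g hg ((-g.1.1, 0), (1 / 2) * g.1.1 * g.1.2 - g.2) (hker _ rfl) using 1
    ext <;> simp only [vert, hmul, ip, theta, Prod.fst_add, Prod.snd_add] <;> ring
  · intro hg
    convert h_mul _ hg ((g.1.1, 0), g.2 - (1 / 2) * g.1.2 * g.1.1) (hker _ rfl) using 1
    ext <;> simp only [vert, hmul, ip, theta, Prod.fst_add, Prod.snd_add] <;> ring

theorem exists_isClosed_addSubgroup_eq_preimage {L : Set H}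
    (h_mul : ∀ g ∈ L, ∀ h ∈ L, hmul g h ∈ L)
    (h_inv : ∀ g ∈ L, ((-g.1.1, -g.1.2), -g.2) ∈ L) (h_closed : IsClosed L)
    (hker : ∀ g : H, g.1.2 = 0 → g ∈ L) :
    ∃ S : AddSubgroup ℝ, IsClosed (S : Set ℝ) ∧ L = {g | g.1.2 ∈ S} := by
  let S : AddSubgroup ℝ :=
    { carrier := vert ⁻¹' L
      zero_mem' := hker _ rfl
      add_mem' := fun {s t} hs ht => by
        convert h_mul _ hs _ ht using 1
        simp [vert, hmul, ip, theta]
      neg_mem' := fun {t} ht => by simpa [vert] using h_inv _ ht }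
  exact ⟨S, h_closed.preimage (by unfold vert; fun_prop),
    Set.ext (mem_iff_vert_mem h_mul hker)⟩

theorem closed_subgroup_dim_two_general (L : Set H)
    (h_mul : ∀ g ∈ L, ∀ h ∈ L, hmul g h ∈ L)
    (h_inv : ∀ g ∈ L, ((-g.1.1, -g.1.2), -g.2) ∈ L)
    (h_closed : IsClosed L)
    (h_comp : connectedComponentIn L (((0 : ℝ), (0 : ℝ)), (0 : ℝ)) =
      {g : H | g.1.2 = 0}) :
    ∃ a : ℝ, 0 ≤ a ∧ L = {g : H | ∃ n : ℤ, g.1.2 = a * n} := by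
  have hker : ∀ g : H, g.1.2 = 0 → g ∈ L := fun g hg =>
    connectedComponentIn_subset L _ (by rw [h_comp]; exact hg)
  obtain ⟨S, hS_closed, rfl⟩ := exists_isClosed_addSubgroup_eq_preimage h_mul h_inv h_closed hker
  rcases S.eq_top_or_exists_eq_zmultiples_of_isClosed hS_closed with rfl | ⟨a, ha, rfl⟩
  · have h_top : {g : H | g.1.2 ∈ (⊤ : AddSubgroup ℝ)} = Set.univ :=
      Set.eq_univ_of_forall fun g => AddSubgroup.mem_top g.1.2
    rw [h_top, connectedComponentIn_univ,
      PreconnectedSpace.connectedComponent_eq_univ] at h_comp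
    have h_vert : vert 1 ∈ {g : H | g.1.2 = 0} := h_comp ▸ Set.mem_univ _
    simp [vert] at h_vert
  · refine ⟨a, ha, Set.ext fun g => ?_⟩
    simp only [AddSubgroup.mem_zmultiples_iff, zsmul_eq_mul, mul_comm, eq_comm]

/-- If L is a 2-dimensional closed subgroup of the Heisenberg group whose
identity component is ℝe₁ × {0} × ℝ, then L = (ℝ × aℤ) × ℝ for some a ≥ 0. -/
theorem closed_subgroup_dim_two (L : Set H)
    (h_one : (((0 : ℝ), (0 : ℝ)), (0 : ℝ)) ∈ L)
    (h_mul : ∀ g ∈ L, ∀ h ∈ L, hmul g h ∈ L)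
    (h_inv : ∀ g ∈ L, ((-g.1.1, -g.1.2), -g.2) ∈ L)
    (h_closed : IsClosed L)
    (h_comp : connectedComponentIn L (((0 : ℝ), (0 : ℝ)), (0 : ℝ)) =
      {g : H | g.1.2 = 0}) :
    ∃ a : ℝ, 0 ≤ a ∧ L = {g : H | ∃ n : ℤ, g.1.2 = a * n} :=
  closed_subgroup_dim_two_general L h_mul h_inv h_closed h_comp
end

section
/- If L is a closed subgroup of the Heisenberg group H with identity component L₀ = ℝe₁ × {0} (i.e., L₀ = {(t,0,0) : t ∈ ℝ}) and dim L = 1, then L = ℝe₁ × {0} × aℤ for some a ≥ 0; in particular (0,ℝ) ∩ L = {0} × aℤ. -/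
/-!
The commutator of `g = ((x, y), z)` with `(t, 0, 0)` is the central element `(0, 0, y t)`.
Since `L` contains the line `ℝe₁`, an element of `L` with `y ≠ 0` would put the whole centre
into `L`, and the centre, being connected, would then lie in the identity component `ℝe₁ × {0}`.
So `L ⊆ ℝe₁ × ℝ`, and `L` is the product of `ℝe₁` with its central part `{z | (0, 0, z) ∈ L}`,
a proper closed subgroup of `ℝ`, hence of the form `aℤ`.
-/

theorem AddSubgroup.exists_nonneg_eq_zmultiples_of_isClosed {G : Type*} [AddCommGroup G]
    [LinearOrder G] [IsOrderedAddMonoid G] [TopologicalSpace G] [OrderTopology G] [Archimedean G]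
    (S : AddSubgroup G) (hS : IsClosed (S : Set G)) (hS_top : S ≠ ⊤) :
    ∃ a : G, 0 ≤ a ∧ S = AddSubgroup.zmultiples a := by
  rcases S.dense_or_cyclic with hdense | ⟨a, rfl⟩
  · refine absurd (AddSubgroup.coe_eq_univ.mp ?_) hS_top
    rw [← hS.closure_eq, hdense.closure_eq]
  · exact ⟨|a|, abs_nonneg a, by rw [zmultiples_abs, AddSubgroup.zmultiples_eq_closure]⟩

namespace Heisenberg

def central (z : ℝ) : H := ((0, 0), z)

def horizontal (t : ℝ) : H := ((t, 0), 0)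

def inv (g : H) : H := ((-g.1.1, -g.1.2), -g.2)

lemma hmul_central_central (a b : ℝ) : hmul (central a) (central b) = central (a + b) := by
  simp [hmul, central, ip, theta]

lemma inv_central (z : ℝ) : inv (central z) = central (-z) := by
  simp [inv, central]

lemma hmul_horizontal_central (t z : ℝ) : hmul (horizontal t) (central z) = ((t, 0), z) := by
  simp [hmul, horizontal, central, ip, theta]

lemma hmul_horizontal_of_snd_eq_zero {g : H} (hg : g.1.2 = 0) :
    hmul (horizontal (-g.1.1)) g = central g.2 := by
  simp only [hmul, horizontal, central, ip, theta, Prod.ext_iff, Prod.fst_add, Prod.snd_add, hg]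
  refine ⟨⟨by ring, by ring⟩, by ring⟩

lemma commutator_horizontal (g : H) (t : ℝ) :
    hmul (hmul (hmul g (horizontal t)) (inv g)) (inv (horizontal t)) = central (g.1.2 * t) := by
  simp only [hmul, horizontal, inv, central, ip, theta, Prod.ext_iff, Prod.fst_add, Prod.snd_add]
  refine ⟨⟨by ring, by ring⟩, by ring⟩

structure IsSubgroup (L : Set H) : Prop where
  one_mem : central 0 ∈ L
  mul_mem : ∀ g ∈ L, ∀ h ∈ L, hmul g h ∈ L
  inv_mem : ∀ g ∈ L, inv g ∈ L

namespace IsSubgroup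

variable {L : Set H} (hL : IsSubgroup L)
include hL

def centralSubgroup : AddSubgroup ℝ where
  carrier := {z | central z ∈ L}
  zero_mem' := hL.one_mem
  add_mem' {a b} ha hb := by
    show central (a + b) ∈ L
    rw [← hmul_central_central]
    exact hL.mul_mem _ ha _ hb
  neg_mem' {a} ha := by
    show central (-a) ∈ L
    rw [← inv_central]
    exact hL.inv_mem _ ha

lemma isClosed_centralSubgroup (hclosed : IsClosed L) :
    IsClosed (hL.centralSubgroup : Set ℝ) :=
  hclosed.preimage (Continuous.prodMk_right _)

lemma central_mem_of_snd_ne_zero (hline : ∀ t, horizontal t ∈ L) {g : H} (hg : g ∈ L)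
    (hy : g.1.2 ≠ 0) (z : ℝ) : central z ∈ L := by
  have hcomm := commutator_horizontal g (z / g.1.2)
  rw [mul_div_cancel₀ z hy] at hcomm
  exact hcomm ▸ hL.mul_mem _ (hL.mul_mem _ (hL.mul_mem _ hg _ (hline _)) _ (hL.inv_mem _ hg)) _
    (hL.inv_mem _ (hline _))

lemma mem_iff_mem_centralSubgroup (hline : ∀ t, horizontal t ∈ L)
    (hsnd : ∀ g ∈ L, g.1.2 = 0) (g : H) :
    g ∈ L ↔ g.1.2 = 0 ∧ g.2 ∈ hL.centralSubgroup := by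
  refine ⟨fun hg => ⟨hsnd g hg, ?_⟩, fun ⟨hy, hz⟩ => ?_⟩
  · show central g.2 ∈ L
    rw [← hmul_horizontal_of_snd_eq_zero (hsnd g hg)]
    exact hL.mul_mem _ (hline _) _ hg
  · have hg : g = ((g.1.1, 0), g.2) := by ext <;> simp [hy]
    rw [hg, ← hmul_horizontal_central]
    exact hL.mul_mem _ (hline _) _ hz

end IsSubgroup

lemma exists_central_not_mem {L : Set H}
    (hcomp : connectedComponentIn L (central 0) = {g : H | g.1.2 = 0 ∧ g.2 = 0}) :
    ∃ z, central z ∉ L := by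
  by_contra! hcenter
  have hsub : Set.range central ⊆ connectedComponentIn L (central 0) :=
    (isPreconnected_range (Continuous.prodMk_right _)).subset_connectedComponentIn
      ⟨0, rfl⟩ (Set.range_subset_iff.mpr hcenter)
  rw [hcomp] at hsub
  exact one_ne_zero (hsub ⟨1, rfl⟩).2

end Heisenberg

open Heisenberg in
theorem closed_subgroup_dim_one_general (L : Set H)
    (h_mul : ∀ g ∈ L, ∀ h ∈ L, hmul g h ∈ L)
    (h_inv : ∀ g ∈ L, ((-g.1.1, -g.1.2), -g.2) ∈ L)
    (h_closed : IsClosed L)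
    (h_comp : connectedComponentIn L (((0 : ℝ), (0 : ℝ)), (0 : ℝ)) =
      {g : H | g.1.2 = 0 ∧ g.2 = 0}) :
    ∃ a : ℝ, 0 ≤ a ∧
      L = {g : H | g.1.2 = 0 ∧ ∃ n : ℤ, g.2 = a * n} ∧
      {g : H | g.1 = 0} ∩ L = {g : H | g.1 = 0 ∧ ∃ n : ℤ, g.2 = a * n} := by
  change connectedComponentIn L (central 0) = _ at h_comp
  have hL : IsSubgroup L :=
    ⟨connectedComponentIn_nonempty_iff.mp (by rw [h_comp]; exact ⟨central 0, rfl, rfl⟩),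
      h_mul, h_inv⟩
  have hline : ∀ t, horizontal t ∈ L := fun t =>
    connectedComponentIn_subset L _ (by rw [h_comp]; exact ⟨rfl, rfl⟩)
  obtain ⟨z, hz⟩ := exists_central_not_mem h_comp
  have hsnd : ∀ g ∈ L, g.1.2 = 0 := fun g hg =>
    by_contra fun hy => hz (hL.central_mem_of_snd_ne_zero hline hg hy z)
  obtain ⟨a, ha, hZ⟩ := hL.centralSubgroup.exists_nonneg_eq_zmultiples_of_isClosed
    (hL.isClosed_centralSubgroup h_closed) (ne_of_mem_of_not_mem' (AddSubgroup.mem_top z) hz).symm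
  have hLa : L = {g : H | g.1.2 = 0 ∧ ∃ n : ℤ, g.2 = a * n} := by
    ext g
    simp only [hL.mem_iff_mem_centralSubgroup hline hsnd, hZ, AddSubgroup.mem_zmultiples_iff,
      zsmul_eq_mul, mul_comm, eq_comm, Set.mem_ofPred_eq]
  refine ⟨a, ha, hLa, ?_⟩
  ext g
  simp only [hLa, Set.mem_inter_iff]
  exact ⟨fun ⟨h0, _, hn⟩ => ⟨h0, hn⟩, fun ⟨h0, hn⟩ => ⟨h0, by simp [h0], hn⟩⟩

/-- If L is a closed subgroup of the Heisenberg group with identity component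
L₀ = ℝe₁ × {0} = {(t,0,0) : t ∈ ℝ}, then L = ℝe₁ × {0} × aℤ for some a ≥ 0; in
particular ({0} × ℝ) ∩ L = {0} × aℤ. -/
theorem closed_subgroup_dim_one (L : Set H)
    (h_one : (((0 : ℝ), (0 : ℝ)), (0 : ℝ)) ∈ L)
    (h_mul : ∀ g ∈ L, ∀ h ∈ L, hmul g h ∈ L)
    (h_inv : ∀ g ∈ L, ((-g.1.1, -g.1.2), -g.2) ∈ L)
    (h_closed : IsClosed L)
    (h_comp : connectedComponentIn L (((0 : ℝ), (0 : ℝ)), (0 : ℝ)) =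
      {g : H | g.1.2 = 0 ∧ g.2 = 0}) :
    ∃ a : ℝ, 0 ≤ a ∧
      L = {g : H | g.1.2 = 0 ∧ ∃ n : ℤ, g.2 = a * n} ∧
      {g : H | g.1 = 0} ∩ L = {g : H | g.1 = 0 ∧ ∃ n : ℤ, g.2 = a * n} :=
  closed_subgroup_dim_one_general L h_mul h_inv h_closed h_comp
end

section
/- If a,b,c > 0 and the set L = aℤ × bℤ × cℤ is a subgroup of the Heisenberg group H, then ab ∈ cℤ. -/
theorem snd_hmul_sub_snd_hmul (g h : H) :
    (hmul h g).2 - (hmul g h).2 = g.1.1 * h.1.2 - g.1.2 * h.1.1 := by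
  simp only [hmul, ip, theta]
  ring

theorem lattice_subgroup_condition_general (a b c : ℝ)
    (L : Set H)
    (hL : L = {g : H | (∃ m : ℤ, g.1.1 = a * m) ∧ (∃ m : ℤ, g.1.2 = b * m) ∧
      ∃ m : ℤ, g.2 = c * m})
    (h_mul : ∀ g ∈ L, ∀ h ∈ L, hmul g h ∈ L) :
    ∃ k : ℤ, a * b = c * k := by
  have hx : (((a, 0), 0) : H) ∈ L := hL ▸ ⟨⟨1, by simp⟩, ⟨0, by simp⟩, ⟨0, by simp⟩⟩
  have hy : (((0, b), 0) : H) ∈ L := hL ▸ ⟨⟨0, by simp⟩, ⟨1, by simp⟩, ⟨0, by simp⟩⟩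
  obtain ⟨-, -, m, hm⟩ := hL ▸ h_mul _ hy _ hx
  obtain ⟨-, -, n, hn⟩ := hL ▸ h_mul _ hx _ hy
  have h_defect := snd_hmul_sub_snd_hmul (((a, 0), 0) : H) ((0, b), 0)
  refine ⟨m - n, ?_⟩
  simp only [mul_zero, sub_zero] at h_defect
  push_cast
  linarith

/-- If a,b,c > 0 and aℤ × bℤ × cℤ is a subgroup of the Heisenberg group,
then ab ∈ cℤ. -/
theorem lattice_subgroup_condition (a b c : ℝ)
    (ha : 0 < a) (hb : 0 < b) (hc : 0 < c)
    (L : Set H)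
    (hL : L = {g : H | (∃ m : ℤ, g.1.1 = a * m) ∧ (∃ m : ℤ, g.1.2 = b * m) ∧
      ∃ m : ℤ, g.2 = c * m})
    (h_mul : ∀ g ∈ L, ∀ h ∈ L, hmul g h ∈ L)
    (h_inv : ∀ g ∈ L, ((-g.1.1, -g.1.2), -g.2) ∈ L) :
    ∃ k : ℤ, a * b = c * k :=
  lattice_subgroup_condition_general a b c L hL h_mul
end
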